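/- Let p ≥ 2. Let Γ have the Haar probability distribution on O_p and let V₁, V₂ be independent random matrices, each Haar distributed on O_{p−1}, with Γ, V₁, V₂ mutually independent. Then the random matrix diag(1, V₁) · ψ₀(Γ₁₁) · diag(1, V₂)ᵀ has the Haar distribution on O_p; that is, its law equals the law of Γ. -/

import Mathlib

/-!
Let `γ = A₁₁` for an orthogonal `A`. A reflection `h₂ ∈ O_{p-1}` moves the rest of the first
row of `A` to `(√(1-γ²), 0, …, 0)`, so `A · diag(1, h₂)ᵀ` and `ψ₀(γ)` are orthogonal matrices
with the same first row; they therefore differ on the left by an element `diag(1, h₁)` of the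
stabiliser of the first basis vector. Right invariance of the Haar measure on `O_{p-1}` absorbs
`h₁, h₂` into `V₁, V₂`, so the law in question is that of `diag(1, V₁) · Γ · diag(1, V₂)ᵀ`,
which is Haar by two-sided invariance.
-/

open MeasureTheory Matrix

/-- The (Borel = product) σ-algebra on real matrices. -/
instance matMeas (m n : ℕ) : MeasurableSpace (Matrix (Fin m) (Fin n) ℝ) := MeasurableSpace.pi

/-- `μ` is the Haar probability distribution on the orthogonal group `O_p`, viewed as a Borel
probability measure on the space of `p × p` real matrices which is concentrated on the set of
orthogonal matrices and invariant under left and right translation by orthogonal matrices. -/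
def IsHaarOrthogonal (p : ℕ) (μ : Measure (Matrix (Fin p) (Fin p) ℝ)) : Prop :=
  IsProbabilityMeasure μ ∧
  μ {A | A ∈ Matrix.orthogonalGroup (Fin p) ℝ} = 1 ∧
  (∀ g ∈ Matrix.orthogonalGroup (Fin p) ℝ, Measure.map (fun A => g * A) μ = μ) ∧
  (∀ g ∈ Matrix.orthogonalGroup (Fin p) ℝ, Measure.map (fun A => A * g) μ = μ)

/-- The density `f(x|p) = Γ(p/2)/(Γ(1/2)Γ((p-1)/2)) (1-x²)^((p-3)/2)` on `(-1,1)`,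
extended by `0` outside `(-1,1)`. -/
noncomputable def haarEntryDensity (p : ℕ) (x : ℝ) : ENNReal :=
  ENNReal.ofReal (if x ∈ Set.Ioo (-1 : ℝ) 1 then
    (Real.Gamma ((p : ℝ) / 2) / (Real.Gamma (1 / 2) * Real.Gamma (((p : ℝ) - 1) / 2))) *
      (1 - x ^ 2) ^ (((p : ℝ) - 3) / 2)
  else 0)

/-- `ν` is the uniform distribution on the unit sphere `S^{k-1} ⊆ ℝ^k`, viewed as the unique
rotation-invariant Borel probability measure on `ℝ^k` concentrated on the unit sphere. -/
def IsUniformOnSphere (k : ℕ) (ν : Measure (EuclideanSpace ℝ (Fin k))) : Prop :=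
  IsProbabilityMeasure ν ∧ ν {u | ‖u‖ = 1} = 1 ∧
  ∀ L : EuclideanSpace ℝ (Fin k) ≃ₗᵢ[ℝ] EuclideanSpace ℝ (Fin k), Measure.map L ν = ν

/-- The `(n+1) × (n+1)` block-diagonal matrix `diag(γ, Δ)` with scalar block `γ` and lower
block `Δ`. -/
def cornerBlock {n : ℕ} (γ : ℝ) (Δ : Matrix (Fin n) (Fin n) ℝ) :
    Matrix (Fin (n + 1)) (Fin (n + 1)) ℝ :=
  Matrix.of fun i j =>
    if hi : i = 0 then (if j = 0 then γ else 0)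
    else if hj : j = 0 then 0
    else Δ (i.pred hi) (j.pred hj)

/-- The matrix `ψ₀(γ)`: the `p × p` orthogonal matrix whose first row and first column both
equal `(γ, √(1-γ²), 0, …, 0)` and whose lower-right `(p-1) × (p-1)` block is
`diag(-γ, I_{p-2})` (here `p = n+2`). -/
noncomputable def psi0 (n : ℕ) (γ : ℝ) : Matrix (Fin (n + 2)) (Fin (n + 2)) ℝ :=
  Matrix.of fun i j =>
    if i = 0 then (if j = 0 then γ else if j = 1 then Real.sqrt (1 - γ ^ 2) else 0)
    else if i = 1 then (if j = 0 then Real.sqrt (1 - γ ^ 2) else if j = 1 then -γ else 0)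
    else if i = j then 1 else 0

/-- The reflection (Householder) matrix `I - 2 w wᵀ / (wᵀ w)`. -/
noncomputable def reflMatrix (p : ℕ) (w : Fin p → ℝ) : Matrix (Fin p) (Fin p) ℝ :=
  1 - (2 / (w ⬝ᵥ w)) • Matrix.vecMulVec w w

instance Matrix.borelSpace_fin (m n : ℕ) : BorelSpace (Matrix (Fin m) (Fin n) ℝ) :=
  inferInstanceAs (BorelSpace (Fin m → Fin n → ℝ))

instance Matrix.secondCountableTopology_fin (m n : ℕ) :
    SecondCountableTopology (Matrix (Fin m) (Fin n) ℝ) :=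
  inferInstanceAs (SecondCountableTopology (Fin m → Fin n → ℝ))

theorem Matrix.exists_mem_orthogonalGroup_mulVec_eq {ι : Type*} [Fintype ι] [DecidableEq ι]
    {u v : ι → ℝ} (h : u ⬝ᵥ u = v ⬝ᵥ v) : ∃ g ∈ orthogonalGroup ι ℝ, g *ᵥ u = v := by
  set x : EuclideanSpace ℝ ι := WithLp.toLp 2 u
  set y : EuclideanSpace ℝ ι := WithLp.toLp 2 v
  have hxy : ‖x‖ = ‖y‖ := by
    rw [EuclideanSpace.norm_eq, EuclideanSpace.norm_eq]
    congr 1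
    simpa [dotProduct, sq] using h
  let e := Unitary.linearIsometryEquiv.symm (Submodule.reflection (ℝ ∙ (x - y))ᗮ)
  let T := Matrix.toEuclideanCLM (𝕜 := ℝ) (n := ι)
  refine ⟨T.symm e, ?_, ?_⟩
  · exact Unitary.map_mem
      (T.symm : (EuclideanSpace ℝ ι →L[ℝ] EuclideanSpace ℝ ι) →⋆ₐ[ℝ] Matrix ι ι ℝ) e.2
  · calc T.symm e *ᵥ u = WithLp.ofLp (T (T.symm e) x) := rfl
      _ = v := by
        rw [T.apply_symm_apply]
        exact congrArg WithLp.ofLp (Submodule.reflection_sub hxy)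

theorem Matrix.dotProduct_row_self_of_mem_orthogonalGroup {ι : Type*} [Fintype ι] [DecidableEq ι]
    {A : Matrix ι ι ℝ} (hA : A ∈ orthogonalGroup ι ℝ) (i : ι) : A i ⬝ᵥ A i = 1 := by
  have := congrFun₂ ((mem_orthogonalGroup_iff ι ℝ).1 hA) i i
  simpa [mul_apply, dotProduct] using this

section CornerBlock

variable {n : ℕ} (γ : ℝ) (V W : Matrix (Fin n) (Fin n) ℝ)

@[simp] theorem cornerBlock_zero_zero : cornerBlock γ V 0 0 = γ := rfl

@[simp] theorem cornerBlock_zero_succ (j : Fin n) : cornerBlock γ V 0 j.succ = 0 := by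
  simp [cornerBlock]

@[simp] theorem cornerBlock_succ_zero (i : Fin n) : cornerBlock γ V i.succ 0 = 0 := by
  simp [cornerBlock]

@[simp] theorem cornerBlock_succ_succ (i j : Fin n) : cornerBlock γ V i.succ j.succ = V i j := by
  simp [cornerBlock]

theorem cornerBlock_mul (δ : ℝ) :
    cornerBlock γ V * cornerBlock δ W = cornerBlock (γ * δ) (V * W) := by
  ext i j
  cases i using Fin.cases <;> cases j using Fin.cases <;> simp [mul_apply, Fin.sum_univ_succ]

theorem cornerBlock_transpose : (cornerBlock γ V)ᵀ = cornerBlock γ Vᵀ := by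
  ext i j
  cases i using Fin.cases <;> cases j using Fin.cases <;> simp

theorem cornerBlock_one_one : cornerBlock 1 (1 : Matrix (Fin n) (Fin n) ℝ) = 1 := by
  ext i j
  cases i using Fin.cases <;> cases j using Fin.cases <;>
    simp [one_apply, Fin.succ_ne_zero, (Fin.succ_ne_zero _).symm]

theorem cornerBlock_mulVec (x : Fin (n + 1) → ℝ) :
    cornerBlock γ V *ᵥ x = Fin.cons (γ * x 0) (V *ᵥ Fin.tail x) := by
  ext i
  cases i using Fin.cases <;> simp [mulVec, dotProduct, Fin.sum_univ_succ, Fin.tail]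

theorem cornerBlock_injective : Function.Injective (cornerBlock (n := n) γ) :=
  fun V W h => ext fun i j => by simpa using congrFun₂ h i.succ j.succ

theorem cornerBlock_one_mem_orthogonalGroup_iff :
    cornerBlock 1 V ∈ orthogonalGroup (Fin (n + 1)) ℝ ↔ V ∈ orthogonalGroup (Fin n) ℝ := by
  simp only [mem_orthogonalGroup_iff, cornerBlock_transpose, cornerBlock_mul, one_mul,
    ← cornerBlock_one_one]
  exact (cornerBlock_injective 1).eq_iff

@[fun_prop]
theorem continuous_cornerBlock : Continuous (cornerBlock (n := n) γ) := by
  refine continuous_pi fun i => continuous_pi fun j => ?_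
  simp only [cornerBlock, of_apply]
  split_ifs <;> fun_prop

end CornerBlock

section Psi0

variable {n : ℕ} (γ : ℝ)

@[simp] theorem psi0_zero_zero : psi0 n γ 0 0 = γ := rfl

theorem psi0_mem_orthogonalGroup (hγ : |γ| ≤ 1) :
    psi0 n γ ∈ orthogonalGroup (Fin (n + 2)) ℝ := by
  have hs : √(1 - γ ^ 2) ^ 2 = 1 - γ ^ 2 := Real.sq_sqrt (by nlinarith [abs_le.1 hγ])
  rw [mem_orthogonalGroup_iff]
  ext i j
  -- split each index into `0`, `1` and `k.succ.succ`
  rcases i.eq_zero_or_eq_succ with rfl | ⟨i, rfl⟩ <;>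
    [skip; rcases i.eq_zero_or_eq_succ with rfl | ⟨i, rfl⟩] <;>
    rcases j.eq_zero_or_eq_succ with rfl | ⟨j, rfl⟩ <;>
    (try rcases j.eq_zero_or_eq_succ with rfl | ⟨j, rfl⟩) <;>
    simp [psi0, mul_apply, Fin.sum_univ_succ, one_apply, Fin.succ_ne_zero,
      (Fin.succ_ne_zero _).symm, Fin.succ_succ_ne_one, (Fin.succ_succ_ne_one _).symm,
      Fin.succ_inj] <;>
    first | ring1 | linear_combination hs

@[fun_prop]
theorem continuous_psi0 : Continuous (psi0 n) := by
  refine continuous_pi fun i => continuous_pi fun j => ?_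
  simp only [psi0, of_apply]
  split_ifs <;> fun_prop

end Psi0

section Orthogonal

variable {n : ℕ}

theorem exists_eq_cornerBlock_of_row_zero {C : Matrix (Fin (n + 1)) (Fin (n + 1)) ℝ}
    (hC : C ∈ orthogonalGroup (Fin (n + 1)) ℝ) (hrow : C 0 = Pi.single 0 1) :
    ∃ h ∈ orthogonalGroup (Fin n) ℝ, C = cornerBlock 1 h := by
  -- `Cᵀ` fixes `e₀`, hence so does its inverse `C`
  have hcol : Cᵀ 0 = Pi.single 0 1 := by
    have hCt : Cᵀ *ᵥ Pi.single 0 1 = Pi.single 0 1 := by rw [mulVec_single_one, ← hrow]; rfl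
    calc Cᵀ 0 = C *ᵥ (Cᵀ *ᵥ Pi.single 0 1) := by rw [hCt, mulVec_single_one]; rfl
      _ = Pi.single 0 1 := by rw [mulVec_mulVec, (mem_orthogonalGroup_iff _ _).1 hC, one_mulVec]
  have hC_eq : C = cornerBlock 1 (C.submatrix Fin.succ Fin.succ) := by
    ext i j
    cases i using Fin.cases <;> cases j using Fin.cases
    · exact congrFun hrow 0
    · exact (congrFun hrow _).trans (Pi.single_eq_of_ne (Fin.succ_ne_zero _) _)
    · exact (congrFun hcol _).trans (Pi.single_eq_of_ne (Fin.succ_ne_zero _) _)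
    · rfl
  exact ⟨_, (cornerBlock_one_mem_orthogonalGroup_iff _).1 (hC_eq ▸ hC), hC_eq⟩

theorem exists_eq_cornerBlock_mul_of_row_zero_eq {P B : Matrix (Fin (n + 1)) (Fin (n + 1)) ℝ}
    (hP : P ∈ orthogonalGroup (Fin (n + 1)) ℝ) (hB : B ∈ orthogonalGroup (Fin (n + 1)) ℝ)
    (hPB : P 0 = B 0) : ∃ h ∈ orthogonalGroup (Fin n) ℝ, P = cornerBlock 1 h * B := by
  have hrow : (P * Bᵀ) 0 = Pi.single 0 1 := by
    rw [mul_apply_eq_vecMul, hPB, ← mul_apply_eq_vecMul, (mem_orthogonalGroup_iff _ _).1 hB]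
    ext j
    simp [one_apply, Pi.single_apply, eq_comm]
  obtain ⟨h, hh, hPBt⟩ := exists_eq_cornerBlock_of_row_zero
    (mul_mem hP (transpose_mem_unitaryGroup_iff.2 hB)) hrow
  refine ⟨h, hh, ?_⟩
  rw [← hPBt, mul_assoc, (mem_orthogonalGroup_iff' _ _).1 hB, mul_one]

theorem exists_psi0_eq_cornerBlock_mul_mul {A : Matrix (Fin (n + 2)) (Fin (n + 2)) ℝ}
    (hA : A ∈ orthogonalGroup (Fin (n + 2)) ℝ) :
    ∃ h₁ ∈ orthogonalGroup (Fin (n + 1)) ℝ, ∃ h₂ ∈ orthogonalGroup (Fin (n + 1)) ℝ,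
      psi0 n (A 0 0) = cornerBlock 1 h₁ * A * (cornerBlock 1 h₂)ᵀ := by
  set γ := A 0 0
  have hΨ : psi0 n γ ∈ orthogonalGroup (Fin (n + 2)) ℝ :=
    psi0_mem_orthogonalGroup γ (by simpa using entry_norm_bound_of_unitary hA 0 0)
  have h_tail :
      Fin.tail (A 0) ⬝ᵥ Fin.tail (A 0) = Fin.tail (psi0 n γ 0) ⬝ᵥ Fin.tail (psi0 n γ 0) := by
    have hA0 := dotProduct_row_self_of_mem_orthogonalGroup hA 0
    have hΨ0 := dotProduct_row_self_of_mem_orthogonalGroup hΨ 0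
    have hsplit (x : Fin (n + 2) → ℝ) : x ⬝ᵥ x = x 0 * x 0 + Fin.tail x ⬝ᵥ Fin.tail x :=
      Fin.sum_univ_succ _
    rw [hsplit] at hA0 hΨ0
    rw [psi0_zero_zero] at hΨ0
    linarith
  obtain ⟨h₂, hh₂, hh₂A⟩ := exists_mem_orthogonalGroup_mulVec_eq h_tail
  have hrow : (A * (cornerBlock 1 h₂)ᵀ) 0 = psi0 n γ 0 := by
    rw [mul_apply_eq_vecMul, vecMul_transpose, cornerBlock_mulVec, one_mul, hh₂A]
    exact Fin.cons_self_tail (psi0 n γ 0)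
  obtain ⟨h₁, hh₁, hΨ_eq⟩ := exists_eq_cornerBlock_mul_of_row_zero_eq hΨ
    (mul_mem hA (transpose_mem_unitaryGroup_iff.2
      ((cornerBlock_one_mem_orthogonalGroup_iff _).2 hh₂)))
    hrow.symm
  exact ⟨h₁, hh₁, h₂, hh₂, by rw [hΨ_eq, mul_assoc]⟩

end Orthogonal

namespace MeasureTheory.Measure

variable {α β γ : Type*} [MeasurableSpace α] [MeasurableSpace β] [MeasurableSpace γ]
  {μ : Measure α} {ρ : Measure β}

theorem map_prod_congr_of_ae_map_prodMk [SFinite ρ] {f g : α × β → γ} (hf : Measurable f)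
    (hg : Measurable g) (h : ∀ᵐ x ∂μ, ρ.map (fun y => f (x, y)) = ρ.map (fun y => g (x, y))) :
    (μ.prod ρ).map f = (μ.prod ρ).map g := by
  ext s hs
  rw [map_apply hf hs, map_apply hg hs, prod_apply (hf hs), prod_apply (hg hs)]
  refine lintegral_congr_ae ?_
  filter_upwards [h] with x hx
  exact (map_apply (hf.comp measurable_prodMk_left) hs).symm.trans
    ((congrArg (· s) hx).trans (map_apply (hg.comp measurable_prodMk_left) hs))

theorem map_prod_eq_of_ae_map_eq [SFinite μ] [IsProbabilityMeasure ρ] {f : α × β → α}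
    (hf : Measurable f) (h : ∀ᵐ y ∂ρ, μ.map (fun x => f (x, y)) = μ) :
    (μ.prod ρ).map f = μ := by
  calc (μ.prod ρ).map f = (ρ.prod μ).map (f ∘ Prod.swap) := by
        rw [← prod_swap, map_map hf measurable_swap]
    _ = (ρ.prod μ).map Prod.snd :=
        map_prod_congr_of_ae_map_prodMk (hf.comp measurable_swap) measurable_snd
          (by simpa [map_id'] using h)
    _ = μ := by rw [map_snd_prod, measure_univ, one_smul]

end MeasureTheory.Measure

namespace IsHaarOrthogonal

section Basic

variable {p : ℕ} {μ : Measure (Matrix (Fin p) (Fin p) ℝ)}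

theorem isProbabilityMeasure (hμ : IsHaarOrthogonal p μ) : IsProbabilityMeasure μ := hμ.1

theorem ae_mem_orthogonalGroup (hμ : IsHaarOrthogonal p μ) :
    ∀ᵐ A ∂μ, A ∈ orthogonalGroup (Fin p) ℝ := by
  have := hμ.isProbabilityMeasure
  exact (ae_iff_measure_eq isClosed_unitary.measurableSet.nullMeasurableSet).2
    (hμ.2.1.trans measure_univ.symm)

theorem map_mul_left (hμ : IsHaarOrthogonal p μ) {g : Matrix (Fin p) (Fin p) ℝ}
    (hg : g ∈ orthogonalGroup (Fin p) ℝ) : μ.map (g * ·) = μ :=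
  hμ.2.2.1 g hg

theorem map_mul_right (hμ : IsHaarOrthogonal p μ) {g : Matrix (Fin p) (Fin p) ℝ}
    (hg : g ∈ orthogonalGroup (Fin p) ℝ) : μ.map (· * g) = μ :=
  hμ.2.2.2 g hg

theorem map_mul_mul (hμ : IsHaarOrthogonal p μ) {g k : Matrix (Fin p) (Fin p) ℝ}
    (hg : g ∈ orthogonalGroup (Fin p) ℝ) (hk : k ∈ orthogonalGroup (Fin p) ℝ) :
    μ.map (fun A => g * A * k) = μ := by
  calc μ.map (fun A => g * A * k) = (μ.map (g * ·)).map (· * k) :=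
        (Measure.map_map (continuous_mul_const k).measurable
          (continuous_const_mul g).measurable).symm
    _ = μ := by rw [hμ.map_mul_left hg, hμ.map_mul_right hk]

end Basic

variable {n : ℕ}

theorem map_prod_cornerBlock_mul_mul_transpose_eq
    {ν : Measure (Matrix (Fin (n + 1)) (Fin (n + 1)) ℝ)} (hν : IsHaarOrthogonal (n + 1) ν)
    {A B : Matrix (Fin (n + 2)) (Fin (n + 2)) ℝ} {h₁ h₂ : Matrix (Fin (n + 1)) (Fin (n + 1)) ℝ}
    (hh₁ : h₁ ∈ orthogonalGroup (Fin (n + 1)) ℝ) (hh₂ : h₂ ∈ orthogonalGroup (Fin (n + 1)) ℝ)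
    (hAB : B = cornerBlock 1 h₁ * A * (cornerBlock 1 h₂)ᵀ) :
    (ν.prod ν).map (fun V => cornerBlock 1 V.1 * B * (cornerBlock 1 V.2)ᵀ) =
      (ν.prod ν).map (fun V => cornerBlock 1 V.1 * A * (cornerBlock 1 V.2)ᵀ) := by
  have := hν.isProbabilityMeasure
  have hmul (V W : Matrix (Fin (n + 1)) (Fin (n + 1)) ℝ) :
      cornerBlock 1 V * cornerBlock 1 W = cornerBlock 1 (V * W) := by
    rw [cornerBlock_mul, one_mul]
  have hT : (ν.prod ν).map (Prod.map (· * h₁) (· * h₂)) = ν.prod ν := by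
    rw [← Measure.map_prod_map _ _ (continuous_mul_const h₁).measurable
      (continuous_mul_const h₂).measurable, hν.map_mul_right hh₁, hν.map_mul_right hh₂]
  calc (ν.prod ν).map (fun V => cornerBlock 1 V.1 * B * (cornerBlock 1 V.2)ᵀ)
      _ = (ν.prod ν).map ((fun V => cornerBlock 1 V.1 * A * (cornerBlock 1 V.2)ᵀ) ∘
          Prod.map (· * h₁) (· * h₂)) := by
        congr 1
        ext V : 1
        simp only [Function.comp_apply, Prod.map, hAB, ← hmul, transpose_mul, mul_assoc]
      _ = (ν.prod ν).map (fun V => cornerBlock 1 V.1 * A * (cornerBlock 1 V.2)ᵀ) := by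
        rw [← Measure.map_map (by fun_prop) (by fun_prop), hT]

theorem map_prod_cornerBlock_mul_mul_transpose
    {μ : Measure (Matrix (Fin (n + 2)) (Fin (n + 2)) ℝ)} (hμ : IsHaarOrthogonal (n + 2) μ)
    {ν : Measure (Matrix (Fin (n + 1)) (Fin (n + 1)) ℝ)} (hν : IsHaarOrthogonal (n + 1) ν) :
    (μ.prod (ν.prod ν)).map (fun q => cornerBlock 1 q.2.1 * q.1 * (cornerBlock 1 q.2.2)ᵀ) =
      μ := by
  have := hμ.isProbabilityMeasure
  have := hν.isProbabilityMeasure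
  refine Measure.map_prod_eq_of_ae_map_eq (by fun_prop) ?_
  filter_upwards [Measure.quasiMeasurePreserving_fst.ae hν.ae_mem_orthogonalGroup,
    Measure.quasiMeasurePreserving_snd.ae hν.ae_mem_orthogonalGroup] with V hV₁ hV₂
  exact hμ.map_mul_mul ((cornerBlock_one_mem_orthogonalGroup_iff _).2 hV₁)
    (transpose_mem_unitaryGroup_iff.2 ((cornerBlock_one_mem_orthogonalGroup_iff _).2 hV₂))

end IsHaarOrthogonal

/-- Proposition 2.4.  Let `p = n+2 ≥ 2`, let `Γ` be Haar distributed on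
`O_p`, and let `V₁, V₂` be Haar distributed on `O_{p-1}`, with `Γ, V₁, V₂` mutually
independent.  Then `diag(1,V₁) · ψ₀(Γ₁₁) · diag(1,V₂)ᵀ` is Haar distributed on `O_p`. -/
theorem conditional_representation_haar (n : ℕ)
    (μ : Measure (Matrix (Fin (n + 2)) (Fin (n + 2)) ℝ)) (hμ : IsHaarOrthogonal (n + 2) μ)
    (ν : Measure (Matrix (Fin (n + 1)) (Fin (n + 1)) ℝ)) (hν : IsHaarOrthogonal (n + 1) ν) :
    Measure.map
        (fun q : Matrix (Fin (n + 2)) (Fin (n + 2)) ℝ ×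
            Matrix (Fin (n + 1)) (Fin (n + 1)) ℝ × Matrix (Fin (n + 1)) (Fin (n + 1)) ℝ =>
          cornerBlock 1 q.2.1 * psi0 n (q.1 0 0) * (cornerBlock 1 q.2.2)ᵀ)
        (μ.prod (ν.prod ν)) = μ := by
  have := hν.isProbabilityMeasure
  refine (Measure.map_prod_congr_of_ae_map_prodMk ?_ ?_ ?_).trans
    (hμ.map_prod_cornerBlock_mul_mul_transpose hν)
  · fun_prop
  · fun_prop
  filter_upwards [hμ.ae_mem_orthogonalGroup] with A hA
  obtain ⟨h₁, hh₁, h₂, hh₂, hψ⟩ := exists_psi0_eq_cornerBlock_mul_mul hA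
  exact hν.map_prod_cornerBlock_mul_mul_transpose_eq hh₁ hh₂ hψ
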